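/- arXiv:2602.02172 — 2 statements merged into one kernel-verified Lean document; each statement's English description precedes it below -/
import Mathlib

section
/- Suppose g and g* are measurable functions bounded in absolute value by B, and Y is integrable. Let T_β(Y) = min(Y, β) be the truncation of Y at level β > 0. Then |E[(Y - g(X))² - (Y - g*(X))²] - E[(T_β Y - g(X))² - (T_β Y - g*(X))²]| ≤ 4 B E[|Y| 1{Y > β}]. -/
/-!
The two excess losses differ by `2 (Y - T_β Y) (g* - g)(X)`. Since `0 < β`, the factor
`Y - T_β Y` vanishes on `{Y ≤ β}` and lies in `[0, |Y|]` on `{β < Y}`, while `|g* - g| ≤ 2B`.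
-/

open MeasureTheory

lemma abs_sub_le_two_mul_of_abs_le {a b B : ℝ} (ha : |a| ≤ B) (hb : |b| ≤ B) :
    |b - a| ≤ 2 * B :=
  two_mul B ▸ (abs_sub b a).trans (add_le_add hb ha)

lemma sq_sub_sub_sq_sub (y a b : ℝ) :
    (y - a) ^ 2 - (y - b) ^ 2 = (b - a) * (2 * y - a - b) := by
  ring

lemma abs_sub_min_le_ite {y β : ℝ} (hβ : 0 ≤ β) :
    |y - min y β| ≤ if β < y then |y| else 0 := by
  split_ifs with h
  · rw [min_eq_right h.le, abs_of_pos (sub_pos.2 h), abs_of_pos (hβ.trans_lt h)]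
    linarith
  · rw [min_eq_left (not_lt.1 h), sub_self, abs_zero]

lemma abs_sq_sub_sub_sq_sub_sub_min_le {y a b B β : ℝ} (ha : |a| ≤ B) (hb : |b| ≤ B)
    (hβ : 0 ≤ β) :
    |((y - a) ^ 2 - (y - b) ^ 2) - ((min y β - a) ^ 2 - (min y β - b) ^ 2)| ≤
      4 * B * if β < y then |y| else 0 := by
  have hite : 0 ≤ if β < y then |y| else 0 := (abs_nonneg _).trans (abs_sub_min_le_ite hβ)
  calc _ = |2 * (y - min y β) * (b - a)| := by congr 1; ring
    _ = 2 * |y - min y β| * |b - a| := by rw [abs_mul, abs_mul, abs_two]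
    _ ≤ 2 * (if β < y then |y| else 0) * (2 * B) := by
        gcongr
        exacts [abs_sub_min_le_ite hβ, abs_sub_le_two_mul_of_abs_le ha hb]
    _ = 4 * B * if β < y then |y| else 0 := by ring

section Integrability

variable {Ω : Type*} [MeasurableSpace Ω] {μ : Measure Ω}

lemma integrable_sq_sub_sub_sq_sub [IsFiniteMeasure μ] {f a b : Ω → ℝ} {B : ℝ}
    (hf : Integrable f μ) (ha : AEStronglyMeasurable a μ) (hb : AEStronglyMeasurable b μ)
    (haB : ∀ᵐ ω ∂μ, |a ω| ≤ B) (hbB : ∀ᵐ ω ∂μ, |b ω| ≤ B) :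
    Integrable (fun ω => (f ω - a ω) ^ 2 - (f ω - b ω) ^ 2) μ := by
  simp_rw [sq_sub_sub_sq_sub]
  refine Integrable.bdd_mul (c := 2 * B)
    (((hf.const_mul 2).sub (.of_bound ha B haB)).sub (.of_bound hb B hbB)) (hb.sub ha) ?_
  filter_upwards [haB, hbB] with ω haω hbω
  exact abs_sub_le_two_mul_of_abs_le haω hbω

lemma integrable_ite_lt_abs {Y : Ω → ℝ} (hY : Integrable Y μ) (β : ℝ) :
    Integrable (fun ω => if β < Y ω then |Y ω| else 0) μ := by
  have hmeas : Measurable fun t : ℝ => if β < t then |t| else 0 :=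
    measurable_abs.ite (measurableSet_lt measurable_const measurable_id) measurable_const
  refine hY.abs.mono' (hmeas.comp_aemeasurable hY.aemeasurable).aestronglyMeasurable
    (ae_of_all _ fun ω => ?_)
  split_ifs <;> simp

end Integrability

theorem truncation_excess_risk_bias_general
    {Ω α : Type*} [MeasurableSpace Ω] [MeasurableSpace α]
    (μ : Measure Ω) [IsProbabilityMeasure μ]
    (X : Ω → α) (Y : Ω → ℝ) (g gstar : α → ℝ) (B βt : ℝ)
    (hX : Measurable X) (hg : Measurable g) (hgs : Measurable gstar)
    (hY : Integrable Y μ)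
    (hgB : ∀ x, |g x| ≤ B) (hgsB : ∀ x, |gstar x| ≤ B) (hβ : 0 < βt) :
    |(∫ ω, ((Y ω - g (X ω)) ^ 2 - (Y ω - gstar (X ω)) ^ 2) ∂μ) -
      ∫ ω, ((min (Y ω) βt - g (X ω)) ^ 2 - (min (Y ω) βt - gstar (X ω)) ^ 2) ∂μ| ≤
      4 * B * ∫ ω, (if βt < Y ω then |Y ω| else 0) ∂μ := by
  have hgX : AEStronglyMeasurable (fun ω => g (X ω)) μ := (hg.comp hX).aestronglyMeasurable
  have hgsX : AEStronglyMeasurable (fun ω => gstar (X ω)) μ :=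
    (hgs.comp hX).aestronglyMeasurable
  have hgXB : ∀ᵐ ω ∂μ, |g (X ω)| ≤ B := ae_of_all _ fun ω => hgB (X ω)
  have hgsXB : ∀ᵐ ω ∂μ, |gstar (X ω)| ≤ B := ae_of_all _ fun ω => hgsB (X ω)
  have hT : Integrable (fun ω => min (Y ω) βt) μ := hY.inf (integrable_const βt)
  rw [← integral_sub (integrable_sq_sub_sub_sq_sub hY hgX hgsX hgXB hgsXB)
    (integrable_sq_sub_sub_sq_sub hT hgX hgsX hgXB hgsXB), ← integral_const_mul]
  refine abs_integral_le_integral_abs.trans <| integral_mono_of_nonneg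
    (ae_of_all _ fun _ => abs_nonneg _) ((integrable_ite_lt_abs hY βt).const_mul _)
    (ae_of_all _ fun ω => ?_)
  exact abs_sq_sub_sub_sq_sub_sub_min_le (hgB _) (hgsB _) hβ.le

/-- Truncation bias of the excess risk: if `g, g*` are bounded by `B` and `Y` is
integrable, with truncation `T_β Y = min Y β`, then
`|E[(Y-g(X))² - (Y-g*(X))²] - E[(T_β Y-g(X))² - (T_β Y-g*(X))²]| ≤ 4B E[|Y| 1{Y>β}]`. -/
theorem truncation_excess_risk_bias
    {Ω α : Type*} [MeasurableSpace Ω] [MeasurableSpace α]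
    (μ : Measure Ω) [IsProbabilityMeasure μ]
    (X : Ω → α) (Y : Ω → ℝ) (g gstar : α → ℝ) (B βt : ℝ)
    (hX : Measurable X) (hg : Measurable g) (hgs : Measurable gstar)
    (hY : Integrable Y μ) (hY2 : Integrable (fun ω => (Y ω) ^ 2) μ)
    (hgB : ∀ x, |g x| ≤ B) (hgsB : ∀ x, |gstar x| ≤ B) (hβ : 0 < βt) :
    |(∫ ω, ((Y ω - g (X ω)) ^ 2 - (Y ω - gstar (X ω)) ^ 2) ∂μ) -
      ∫ ω, ((min (Y ω) βt - g (X ω)) ^ 2 - (min (Y ω) βt - gstar (X ω)) ^ 2) ∂μ| ≤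
      4 * B * ∫ ω, (if βt < Y ω then |Y ω| else 0) ∂μ :=
  truncation_excess_risk_bias_general μ X Y g gstar B βt hX hg hgs hY hgB hgsB hβ
end

section
/- Let A and B be random variables with |A| ≤ K and |B| ≤ K almost surely and E[B(A - B)] = 0, and let S = A² - B². Then E[S²] ≤ 5K² E[S]. -/
open MeasureTheory

/-- If `S = A² - B²` with `|A| ≤ K`, `|B| ≤ K` a.s. and `E[B(A - B)] = 0`,
then `E[S²] ≤ 5K² E[S]`. -/
theorem second_moment_excess_loss
    {Ω : Type*} [MeasurableSpace Ω] (μ : Measure Ω) [IsProbabilityMeasure μ]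
    (A B : Ω → ℝ) (K : ℝ)
    (hA : Measurable A) (hB : Measurable B)
    (hAK : ∀ᵐ ω ∂μ, |A ω| ≤ K) (hBK : ∀ᵐ ω ∂μ, |B ω| ≤ K)
    (horth : (∫ ω, B ω * (A ω - B ω) ∂μ) = 0) :
    (∫ ω, ((A ω) ^ 2 - (B ω) ^ 2) ^ 2 ∂μ) ≤
      5 * K ^ 2 * ∫ ω, ((A ω) ^ 2 - (B ω) ^ 2) ∂μ := by
  obtain ⟨ω0, hω0A, hω0B⟩ := (hAK.and hBK).exists
  have hK : 0 ≤ K := le_trans (abs_nonneg _) hω0A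
  have hDK : ∀ᵐ ω ∂μ, |A ω - B ω| ≤ 2 * K := by
    filter_upwards [hAK, hBK] with ω h1 h2
    calc |A ω - B ω| ≤ |A ω| + |B ω| := abs_sub _ _
    _ ≤ 2 * K := by linarith
  have mD2 : Measurable (fun ω => (A ω - B ω) ^ 2) := (hA.sub hB).pow_const 2
  have iD2 : Integrable (fun ω => (A ω - B ω) ^ 2) μ := by
    apply (integrable_const ((2 * K) ^ 2)).mono' mD2.aestronglyMeasurable
    filter_upwards [hDK] with ω h
    rw [Real.norm_eq_abs, abs_of_nonneg (sq_nonneg _)]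
    calc (A ω - B ω) ^ 2 = |A ω - B ω| ^ 2 := (sq_abs _).symm
    _ ≤ (2 * K) ^ 2 := by nlinarith [abs_nonneg (A ω - B ω)]
  have iBD : Integrable (fun ω => B ω * (A ω - B ω)) μ := by
    apply (integrable_const (K * (2 * K))).mono' (hB.mul (hA.sub hB)).aestronglyMeasurable
    filter_upwards [hBK, hDK] with ω h1 h2
    rw [Real.norm_eq_abs, Pi.mul_apply, Pi.sub_apply, abs_mul]
    exact mul_le_mul h1 h2 (abs_nonneg _) hK
  have hES : ∫ ω, ((A ω) ^ 2 - (B ω) ^ 2) ∂μ = ∫ ω, (A ω - B ω) ^ 2 ∂μ := by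
    have heq : (fun ω => (A ω) ^ 2 - (B ω) ^ 2)
        = fun ω => (A ω - B ω) ^ 2 + 2 * (B ω * (A ω - B ω)) := by
      funext ω; ring
    rw [heq, integral_add iD2 (iBD.const_mul 2), integral_const_mul, horth]
    ring
  have iS2 : Integrable (fun ω => ((A ω) ^ 2 - (B ω) ^ 2) ^ 2) μ := by
    apply (integrable_const (((2 * K) * (2 * K)) ^ 2)).mono'
      (((hA.pow_const 2).sub (hB.pow_const 2)).pow_const 2).aestronglyMeasurable
    filter_upwards [hAK, hBK, hDK] with ω h1 h2 h3
    rw [Real.norm_eq_abs, abs_of_nonneg (sq_nonneg _)]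
    have hab : |A ω + B ω| ≤ 2 * K := by
      calc |A ω + B ω| ≤ |A ω| + |B ω| := abs_add_le _ _
      _ ≤ 2 * K := by linarith
    have : ((A ω) ^ 2 - (B ω) ^ 2) ^ 2 = ((A ω + B ω) * (A ω - B ω)) ^ 2 := by ring
    rw [show ((fun x => A x ^ 2) - fun x => B x ^ 2) ω = A ω ^ 2 - B ω ^ 2 from rfl, this]
    calc ((A ω + B ω) * (A ω - B ω)) ^ 2 = (|A ω + B ω| * |A ω - B ω|) ^ 2 := by
          rw [← abs_mul, sq_abs]
    _ ≤ ((2 * K) * (2 * K)) ^ 2 := by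
          have h0 : 0 ≤ |A ω + B ω| * |A ω - B ω| :=
            mul_nonneg (abs_nonneg _) (abs_nonneg _)
          have hm : |A ω + B ω| * |A ω - B ω| ≤ (2 * K) * (2 * K) :=
            mul_le_mul hab h3 (abs_nonneg _) (by linarith)
          nlinarith
  have hmain : ∫ ω, ((A ω) ^ 2 - (B ω) ^ 2) ^ 2 ∂μ
      ≤ 4 * K ^ 2 * ∫ ω, (A ω - B ω) ^ 2 ∂μ := by
    rw [← integral_const_mul]
    apply integral_mono_ae iS2 (iD2.const_mul _)
    filter_upwards [hAK, hBK] with ω h1 h2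
    have h3 : (A ω + B ω) ^ 2 ≤ (2 * K) ^ 2 := by
      obtain ⟨ha1, ha2⟩ := abs_le.1 h1
      obtain ⟨hb1, hb2⟩ := abs_le.1 h2
      nlinarith [sq_nonneg (A ω + B ω - 2 * K), sq_nonneg (A ω + B ω + 2 * K)]
    calc ((A ω) ^ 2 - (B ω) ^ 2) ^ 2 = (A ω + B ω) ^ 2 * (A ω - B ω) ^ 2 := by ring
    _ ≤ (2 * K) ^ 2 * (A ω - B ω) ^ 2 := mul_le_mul_of_nonneg_right h3 (sq_nonneg _)
    _ = 4 * K ^ 2 * (A ω - B ω) ^ 2 := by ring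
  have hnn : 0 ≤ ∫ ω, (A ω - B ω) ^ 2 ∂μ := integral_nonneg fun ω => sq_nonneg _
  calc ∫ ω, ((A ω) ^ 2 - (B ω) ^ 2) ^ 2 ∂μ
      ≤ 4 * K ^ 2 * ∫ ω, (A ω - B ω) ^ 2 ∂μ := hmain
  _ ≤ 5 * K ^ 2 * ∫ ω, (A ω - B ω) ^ 2 ∂μ := by nlinarith [sq_nonneg K]
  _ = 5 * K ^ 2 * ∫ ω, ((A ω) ^ 2 - (B ω) ^ 2) ∂μ := by rw [hES]
end
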